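/- A finite game is weakly acyclic under best response if and only if every sink (bottom strongly connected component) of its best-response dynamics graph is a singleton consisting of a pure Nash equilibrium. -/

import Mathlib

/-! A profile reachable from a pure Nash equilibrium is that equilibrium, since a Nash
equilibrium has no outgoing best-response edge; so a sink containing a Nash equilibrium is
that singleton, and weak acyclicity puts one in every sink. Conversely, in a finite graph every
vertex reaches a sink: pick a reachable vertex whose reachable set is minimal for inclusion. -/

section Defs

variable {n : ℕ} {S : Fin n → Type*}

/-- A better-response transition: `s'` differs from `s` only in player `i`'s
strategy, which strictly improves `i`'s utility. -/
def IsBetter (u : ∀ i : Fin n, (∀ j, S j) → ℝ) (s s' : ∀ j, S j) : Prop :=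
  ∃ i, s' = Function.update s i (s' i) ∧ s' i ≠ s i ∧ u i s < u i s'

/-- A best-response transition: additionally the new strategy maximizes
`i`'s utility against the others' strategies. -/
def IsBest (u : ∀ i : Fin n, (∀ j, S j) → ℝ) (s s' : ∀ j, S j) : Prop :=
  ∃ i, s' = Function.update s i (s' i) ∧ s' i ≠ s i ∧ u i s < u i s' ∧
    ∀ t : S i, u i (Function.update s i t) ≤ u i s'

/-- Pure Nash equilibrium. -/
def IsNash (u : ∀ i : Fin n, (∀ j, S j) → ℝ) (s : ∀ j, S j) : Prop :=
  ∀ i, ∀ t : S i, u i (Function.update s i t) ≤ u i s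

/-- Weak acyclicity (under better response). -/
def WeaklyAcyclic (u : ∀ i : Fin n, (∀ j, S j) → ℝ) : Prop :=
  ∀ s, ∃ e, Relation.ReflTransGen (IsBetter u) s e ∧ IsNash u e

/-- Weak acyclicity under best response. -/
def WeaklyAcyclicBest (u : ∀ i : Fin n, (∀ j, S j) → ℝ) : Prop :=
  ∀ s, ∃ e, Relation.ReflTransGen (IsBest u) s e ∧ IsNash u e

/-- Membership of a profile in the subgame given by strategy sets `T`. -/
def InSub (T : ∀ i, Set (S i)) (s : ∀ j, S j) : Prop := ∀ i, s i ∈ T i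

/-- Pure Nash equilibrium of the subgame given by `T`. -/
def IsNashOn (u : ∀ i : Fin n, (∀ j, S j) → ℝ) (T : ∀ i, Set (S i)) (s : ∀ j, S j) : Prop :=
  InSub T s ∧ ∀ i, ∀ t ∈ T i, u i (Function.update s i t) ≤ u i s

/-- Best-response transition within the subgame given by `T`. -/
def IsBestOn (u : ∀ i : Fin n, (∀ j, S j) → ℝ) (T : ∀ i, Set (S i)) (s s' : ∀ j, S j) : Prop :=
  InSub T s ∧ InSub T s' ∧ ∃ i, s' = Function.update s i (s' i) ∧ s' i ≠ s i ∧
    u i s < u i s' ∧ ∀ t ∈ T i, u i (Function.update s i t) ≤ u i s'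

/-- Subgame stability: every subgame has a pure Nash equilibrium. -/
def SubgameStable (u : ∀ i : Fin n, (∀ j, S j) → ℝ) : Prop :=
  ∀ T : ∀ i, Set (S i), (∀ i, (T i).Nonempty) → ∃ s, IsNashOn u T s

/-- Unique subgame stability: every subgame has exactly one pure Nash equilibrium. -/
def USS (u : ∀ i : Fin n, (∀ j, S j) → ℝ) : Prop :=
  ∀ T : ∀ i, Set (S i), (∀ i, (T i).Nonempty) → ∃! s, IsNashOn u T s

/-- Strict game: no player is indifferent between two of its own strategies
against a fixed profile of the others. -/
def StrictGame (u : ∀ i : Fin n, (∀ j, S j) → ℝ) : Prop :=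
  ∀ i (s : ∀ j, S j) (t : S i), t ≠ s i → u i (Function.update s i t) ≠ u i s

/-- Reachability by best-response improvement paths. -/
def BRReach (u : ∀ i : Fin n, (∀ j, S j) → ℝ) (s t : ∀ j, S j) : Prop :=
  Relation.ReflTransGen (IsBest u) s t

/-- The (strategy sets of the) subgame spanned by `BR_Γ(s)`. -/
def SpanBR (u : ∀ i : Fin n, (∀ j, S j) → ℝ) (s : ∀ j, S j) : ∀ i, Set (S i) :=
  fun i => {x | ∃ t, BRReach u s t ∧ t i = x}

/-- A sink of the best-response dynamics: a nonempty set of profiles closed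
under best-response transitions and strongly connected. -/
def IsSinkBest (u : ∀ i : Fin n, (∀ j, S j) → ℝ) (X : Set (∀ j, S j)) : Prop :=
  X.Nonempty ∧ (∀ s ∈ X, ∀ s', IsBest u s s' → s' ∈ X) ∧
    ∀ s ∈ X, ∀ s' ∈ X, Relation.ReflTransGen (IsBest u) s s'

end Defs

namespace Relation

theorem exists_reflTransGen_forall_reflTransGen_back {α : Type*} [Finite α]
    (r : α → α → Prop) (a : α) :
    ∃ b, ReflTransGen r a b ∧ ∀ c, ReflTransGen r b c → ReflTransGen r c b := by
  obtain ⟨b, hab, hmin⟩ := exists_minimalFor_of_wellFoundedLT (ReflTransGen r a)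
    (fun x => {y | ReflTransGen r x y}) ⟨a, .refl⟩
  refine ⟨b, hab, fun c hbc => ?_⟩
  have hsub : {y | ReflTransGen r c y} ⊆ {y | ReflTransGen r b y} := fun _ hy => hbc.trans hy
  exact hmin (hab.trans hbc) hsub .refl

end Relation

open Relation

section BestResponse

variable {n : ℕ} {S : Fin n → Type*} {u : ∀ i : Fin n, (∀ j, S j) → ℝ}

theorem IsNash.not_isBest {e s : ∀ j, S j} (he : IsNash u e) : ¬ IsBest u e s := by
  rintro ⟨i, hs, -, hlt, -⟩
  have hle := he i (s i)
  rw [← hs] at hle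
  exact hle.not_gt hlt

theorem IsNash.eq_of_reflTransGen {e s : ∀ j, S j} (he : IsNash u e)
    (h : ReflTransGen (IsBest u) e s) : s = e := by
  induction h with
  | refl => rfl
  | tail _ hbest ih => exact absurd (ih ▸ hbest) he.not_isBest

theorem IsSinkBest.mem_of_reflTransGen {X : Set (∀ j, S j)} (hX : IsSinkBest u X)
    {s t : ∀ j, S j} (hs : s ∈ X) (h : ReflTransGen (IsBest u) s t) : t ∈ X := by
  induction h with
  | refl => exact hs
  | tail _ hbest ih => exact hX.2.1 _ ih _ hbest

theorem IsSinkBest.eq_singleton_of_isNash {X : Set (∀ j, S j)} (hX : IsSinkBest u X)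
    {e : ∀ j, S j} (heX : e ∈ X) (he : IsNash u e) : X = {e} :=
  Set.eq_singleton_iff_unique_mem.2 ⟨heX, fun s hs => he.eq_of_reflTransGen (hX.2.2 e heX s hs)⟩

theorem isSinkBest_setOf_reflTransGen {b : ∀ j, S j}
    (hb : ∀ c, ReflTransGen (IsBest u) b c → ReflTransGen (IsBest u) c b) :
    IsSinkBest u {c | ReflTransGen (IsBest u) b c} :=
  ⟨⟨b, .refl⟩, fun _ hc _ hbest => hc.tail hbest,
    fun c hc _ hd => (hb c hc).trans hd⟩

end BestResponse

theorem stmt16_general {n : ℕ} {S : Fin n → Type*} [∀ i, Fintype (S i)]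
    (u : ∀ i : Fin n, (∀ j, S j) → ℝ) :
    WeaklyAcyclicBest u ↔
      ∀ X : Set (∀ j, S j), IsSinkBest u X → ∃ s, X = {s} ∧ IsNash u s := by
  constructor
  · intro hwa X hX
    obtain ⟨s, hs⟩ := hX.1
    obtain ⟨e, hse, he⟩ := hwa s
    exact ⟨e, hX.eq_singleton_of_isNash (hX.mem_of_reflTransGen hs hse) he, he⟩
  · intro hsinks s
    obtain ⟨b, hsb, hb⟩ := exists_reflTransGen_forall_reflTransGen_back (IsBest u) s
    obtain ⟨e, hbe, he⟩ := hsinks _ (isSinkBest_setOf_reflTransGen hb)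
    have hb_eq : b = e := hbe.subset (ReflTransGen.refl : ReflTransGen (IsBest u) b b)
    exact ⟨e, hb_eq ▸ hsb, he⟩

theorem stmt16 {n : ℕ} {S : Fin n → Type*} [∀ i, Fintype (S i)] [∀ i, Nonempty (S i)]
    (u : ∀ i : Fin n, (∀ j, S j) → ℝ) :
    WeaklyAcyclicBest u ↔
      ∀ X : Set (∀ j, S j), IsSinkBest u X → ∃ s, X = {s} ∧ IsNash u s :=
  stmt16_general u
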